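/- Let A be a bounded linear operator on H. Then ber(A)² ≤ (1/12)·‖ |A|² + |A*|² ‖_ber + (1/6)·ber( |A*|·|A| ) + (1/3)·ber(A)·‖ |A| + |A*| ‖_ber. -/

import Mathlib

open ContinuousLinearMap
open scoped InnerProductSpace

/-- The `t`-Berezin norm of `A` with respect to the family `k` of (normalized reproducing
kernel) vectors. -/
noncomputable def tber {E : Type*} [NormedAddCommGroup E] [InnerProductSpace ℂ E]
    [CompleteSpace E] {ι : Type*} (k : ι → E) (t : ℝ) (A : E →L[ℂ] E) : ℝ :=
  ⨆ p : ι × ι, (t * ‖⟪A (k p.1), k p.2⟫_ℂ‖ + (1 - t) * ‖⟪adjoint A (k p.1), k p.2⟫_ℂ‖)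

/-- The Berezin norm of `A` with respect to the family `k`. -/
noncomputable def berNorm {E : Type*} [NormedAddCommGroup E] [InnerProductSpace ℂ E]
    {ι : Type*} (k : ι → E) (A : E →L[ℂ] E) : ℝ :=
  ⨆ p : ι × ι, ‖⟪A (k p.1), k p.2⟫_ℂ‖

/-- The Berezin number of `A` with respect to the family `k`. -/
noncomputable def berNum {E : Type*} [NormedAddCommGroup E] [InnerProductSpace ℂ E]
    {ι : Type*} (k : ι → E) (A : E →L[ℂ] E) : ℝ :=
  ⨆ l : ι, ‖⟪A (k l), k l⟫_ℂ‖

/-- The modulus `|A| = (A*A)^(1/2)` of an operator, via the continuous functional calculus. -/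
noncomputable def absOp {H : Type*} [NormedAddCommGroup H] [InnerProductSpace ℂ H]
    [CompleteSpace H] (A : H →L[ℂ] H) : H →L[ℂ] H :=
  cfc Real.sqrt (adjoint A * A)

/-- Real powers of a (positive) operator via the continuous functional calculus. -/
noncomputable def rpowOp {H : Type*} [NormedAddCommGroup H] [InnerProductSpace ℂ H]
    [CompleteSpace H] (A : H →L[ℂ] H) (r : ℝ) : H →L[ℂ] H :=
  cfc (fun x : ℝ => x ^ r) A


open RCLike

section Helpers

open Polynomial in
lemma poly_approx (f : ℝ → ℝ) (hf : Continuous f) (M : ℝ) {ε : ℝ} (hε : 0 < ε) :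
    ∃ p : ℝ[X], ∀ x ∈ Set.Icc (-M) M, |f x - p.eval x| ≤ ε := by
  set s : Set ℝ := Set.Icc (-M) M with hs
  let F : C(s, ℝ) := ⟨fun x => f x, hf.comp continuous_subtype_val⟩
  have hmem : F ∈ (polynomialFunctions s).topologicalClosure := by
    rw [polynomialFunctions.topologicalClosure]; trivial
  have hclos : F ∈ closure (polynomialFunctions s : Set C(s, ℝ)) := hmem
  obtain ⟨G, hG, hdist⟩ := Metric.mem_closure_iff.mp hclos ε hε
  rw [polynomialFunctions_coe] at hG
  obtain ⟨p, rfl⟩ := hG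
  refine ⟨p, fun x hx => ?_⟩
  calc |f x - p.eval x|
      = dist (F ⟨x, hx⟩) ((Polynomial.toContinuousMapOnAlgHom s) p ⟨x, hx⟩) := by
        simp [F, Real.dist_eq]
    _ ≤ dist F ((Polynomial.toContinuousMapOnAlgHom s) p) :=
        ContinuousMap.dist_apply_le_dist _
    _ ≤ ε := le_of_lt hdist

open ContinuousLinearMap
open scoped InnerProductSpace

variable {H : Type*} [NormedAddCommGroup H] [InnerProductSpace ℂ H] [CompleteSpace H]

lemma sa_mul_adj (A : H →L[ℂ] H) : IsSelfAdjoint (adjoint A * A) := by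
  rw [← star_eq_adjoint]; exact IsSelfAdjoint.star_mul_self A

lemma sa_adj_mul (A : H →L[ℂ] H) : IsSelfAdjoint (A * adjoint A) := by
  rw [← star_eq_adjoint]; exact IsSelfAdjoint.mul_star_self A

lemma nonneg_mul_adj (A : H →L[ℂ] H) : (0:H →L[ℂ] H) ≤ adjoint A * A := by
  rw [← star_eq_adjoint]; exact star_mul_self_nonneg A

lemma nonneg_adj_mul (A : H →L[ℂ] H) : (0:H →L[ℂ] H) ≤ A * adjoint A := by
  rw [← star_eq_adjoint]; exact mul_star_self_nonneg A

open Polynomial in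
lemma intertwine_pow (A : H →L[ℂ] H) (n : ℕ) :
    A * (adjoint A * A) ^ n = (A * adjoint A) ^ n * A := by
  induction n with
  | zero => simp
  | succ n ih =>
      rw [pow_succ, ← mul_assoc, ih, pow_succ, mul_assoc, mul_assoc, mul_assoc]

open Polynomial in
lemma intertwine_poly (A : H →L[ℂ] H) (p : ℝ[X]) :
    A * aeval (adjoint A * A) p = aeval (A * adjoint A) p * A := by
  induction p using Polynomial.induction_on' with
  | add p q hp hq => simp [map_add, add_mul, mul_add, hp, hq]
  | monomial n c =>
      simp only [aeval_monomial]
      rw [← mul_assoc, ← Algebra.commutes, mul_assoc, intertwine_pow, ← mul_assoc]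

lemma spec_subset_Icc (T : H →L[ℂ] H) (hT : IsSelfAdjoint T) (M : ℝ)
    (hM : ‖T‖ * ‖(1 : H →L[ℂ] H)‖ ≤ M) : spectrum ℝ T ⊆ Set.Icc (-M) M := by
  intro x hx
  have := spectrum.subset_closedBall_norm_mul (𝕜 := ℝ) T hx
  rw [Metric.mem_closedBall, Real.dist_eq, sub_zero] at this
  have habs : |x| ≤ M := this.trans hM
  exact abs_le.mp habs

lemma intertwine (A : H →L[ℂ] H) (f : ℝ → ℝ) (hf : Continuous f) :
    A * cfc f (adjoint A * A) = cfc f (A * adjoint A) * A := by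
  set a := adjoint A * A with ha_def
  set b := A * adjoint A with hb_def
  have ha := sa_mul_adj A
  have hb := sa_adj_mul A
  set M : ℝ := max (‖a‖ * ‖(1 : H →L[ℂ] H)‖) (‖b‖ * ‖(1 : H →L[ℂ] H)‖) with hM_def
  have hsa : spectrum ℝ a ⊆ Set.Icc (-M) M := spec_subset_Icc a ha M (le_max_left _ _)
  have hsb : spectrum ℝ b ⊆ Set.Icc (-M) M := spec_subset_Icc b hb M (le_max_right _ _)
  set D := A * cfc f a - cfc f b * A with hD_def
  have key : ∀ ε : ℝ, 0 < ε → ‖D‖ ≤ ε * (2 * ‖A‖ + 1) := by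
    intro ε hε
    obtain ⟨p, hp⟩ := poly_approx f hf M hε
    have hcfa : ‖cfc f a - cfc p.eval a‖ ≤ ε := by
      rw [← cfc_sub (a := a) f p.eval]
      exact norm_cfc_le hε.le fun x hx => by
        simpa [Real.norm_eq_abs] using hp x (hsa hx)
    have hcfb : ‖cfc f b - cfc p.eval b‖ ≤ ε := by
      rw [← cfc_sub (a := b) f p.eval]
      exact norm_cfc_le hε.le fun x hx => by
        simpa [Real.norm_eq_abs] using hp x (hsb hx)
    have hpoly : A * cfc p.eval a = cfc p.eval b * A := by
      rw [cfc_polynomial (a := a), cfc_polynomial (a := b)]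
      exact intertwine_poly A p
    have hD : D = A * (cfc f a - cfc p.eval a) - (cfc f b - cfc p.eval b) * A := by
      rw [hD_def, mul_sub, sub_mul, hpoly]
      abel
    calc ‖D‖ ≤ ‖A * (cfc f a - cfc p.eval a)‖ + ‖(cfc f b - cfc p.eval b) * A‖ := by
          rw [hD]; exact norm_sub_le _ _
      _ ≤ ‖A‖ * ε + ε * ‖A‖ := by
          gcongr
          · exact (norm_mul_le _ _).trans (by gcongr)
          · exact (norm_mul_le _ _).trans (by gcongr)
      _ ≤ ε * (2 * ‖A‖ + 1) := by nlinarith [norm_nonneg A]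
  have hD0 : ‖D‖ ≤ 0 := by
    by_contra hpos
    push_neg at hpos
    have := key (‖D‖ / (2 * (2 * ‖A‖ + 1))) (by positivity)
    rw [div_mul_eq_mul_div] at this
    have h1 : (0:ℝ) < 2 * ‖A‖ + 1 := by positivity
    have h2 : ‖D‖ * (2 * ‖A‖ + 1) / (2 * (2 * ‖A‖ + 1)) = ‖D‖ / 2 := by
      field_simp
    rw [h2] at this
    linarith
  have : D = 0 := by rwa [← norm_le_zero_iff]
  rw [hD_def, sub_eq_zero] at this
  exact this


variable {H : Type*} [NormedAddCommGroup H] [InnerProductSpace ℂ H] [CompleteSpace H]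

lemma sa_inner_left_right {S : H →L[ℂ] H} (hS : IsSelfAdjoint S) (z w : H) :
    ⟪S z, w⟫_ℂ = ⟪z, S w⟫_ℂ := by
  conv_lhs => rw [← hS.adjoint_eq]
  exact adjoint_inner_left S w z

lemma inner_nonneg_of_nonneg {S : H →L[ℂ] H} (hS : (0:H →L[ℂ] H) ≤ S) (z : H) :
    0 ≤ re ⟪S z, z⟫_ℂ :=
  (RCLike.nonneg_iff.mp (((ContinuousLinearMap.nonneg_iff_isPositive S).mp hS).inner_nonneg_left z)).1

lemma kato_eps (A : H →L[ℂ] H) (x y : H) {ε : ℝ} (hε : 0 < ε) :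
    ‖⟪A x, y⟫_ℂ‖ ^ 2 ≤
      (re ⟪cfc Real.sqrt (adjoint A * A) x, x⟫_ℂ + ε * ‖x‖ ^ 2) *
        re ⟪cfc Real.sqrt (A * adjoint A) y, y⟫_ℂ := by
  set a := adjoint A * A with ha_def
  set b := A * adjoint A with hb_def
  set B := adjoint A with hB_def
  have ha : IsSelfAdjoint a := sa_mul_adj A
  have hb : IsSelfAdjoint b := sa_adj_mul A
  set u : ℝ → ℝ := fun t => Real.sqrt (Real.sqrt t + ε) with hu_def
  set v : ℝ → ℝ := fun t => (Real.sqrt (Real.sqrt t + ε))⁻¹ with hv_def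
  set v2 : ℝ → ℝ := fun t => (Real.sqrt t + ε)⁻¹ with hv2_def
  have hbase : ∀ t : ℝ, 0 < Real.sqrt t + ε := fun t => by
    have := Real.sqrt_nonneg t; linarith
  have hu0 : ∀ t : ℝ, Real.sqrt (Real.sqrt t + ε) ≠ 0 :=
    fun t => ne_of_gt (Real.sqrt_pos.mpr (hbase t))
  have hu : Continuous u := by fun_prop
  have hv : Continuous v := hu.inv₀ hu0
  have hv2 : Continuous v2 := by
    have h : Continuous fun t : ℝ => Real.sqrt t + ε := by fun_prop
    exact h.inv₀ fun t => ne_of_gt (hbase t)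
  set U := cfc u a with hU_def
  set V := cfc v a with hV_def
  have hUsa : IsSelfAdjoint U := cfc_predicate u a
  have hVsa : IsSelfAdjoint V := cfc_predicate v a
  have hVU : V * U = 1 := by
    rw [hV_def, hU_def, ← cfc_mul v u a hv.continuousOn hu.continuousOn]
    calc cfc (fun t => v t * u t) a = cfc (fun _ : ℝ => (1:ℝ)) a := by
          apply cfc_congr; intro t _
          exact inv_mul_cancel₀ (hu0 t)
      _ = 1 := cfc_const_one ℝ a
  have hxVU : V (U x) = x := by
    have h : (V * U) x = x := by rw [hVU]; rfl
    simpa [ContinuousLinearMap.mul_apply] using h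
  -- ‖U x‖²
  have hUU : U * U = cfc (fun t => ε + Real.sqrt t) a := by
    rw [hU_def, ← cfc_mul u u a hu.continuousOn hu.continuousOn]
    apply cfc_congr; intro t _
    simp only [hu_def]
    rw [Real.mul_self_sqrt (hbase t).le]; ring
  have hSplit : cfc (fun t => ε + Real.sqrt t) a
      = algebraMap ℝ (H →L[ℂ] H) ε + cfc Real.sqrt a :=
    cfc_const_add ε Real.sqrt a Real.continuous_sqrt.continuousOn
  have hUx : ‖U x‖ ^ 2 = re ⟪cfc Real.sqrt a x, x⟫_ℂ + ε * ‖x‖ ^ 2 := by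
    rw [← inner_self_eq_norm_sq (𝕜 := ℂ) (U x)]
    have h1 : ⟪U x, U x⟫_ℂ = ⟪(U * U) x, x⟫_ℂ := by
      rw [ContinuousLinearMap.mul_apply]
      exact (sa_inner_left_right hUsa (U x) x).symm
    rw [h1, hUU, hSplit]
    rw [ContinuousLinearMap.add_apply, inner_add_left, map_add]
    have h2 : (algebraMap ℝ (H →L[ℂ] H) ε) x = ε • x := by
      rw [Algebra.algebraMap_eq_smul_one, ContinuousLinearMap.smul_apply,
        ContinuousLinearMap.one_apply]
    rw [h2, RCLike.real_smul_eq_coe_smul (K := ℂ), inner_smul_left, RCLike.conj_ofReal,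
      re_ofReal_mul, inner_self_eq_norm_sq]
    ring
  -- ‖V (B y)‖²
  have hVV : V * V = cfc v2 a := by
    rw [hV_def, ← cfc_mul v v a hv.continuousOn hv.continuousOn]
    apply cfc_congr; intro t _
    simp only [hv_def, hv2_def]
    rw [← mul_inv, Real.mul_self_sqrt (hbase t).le]
  have hAV : A * (V * V) = cfc v2 b * A := by
    rw [hVV]
    exact intertwine A v2 hv2
  have hW : A * (V * V) * B = cfc (fun t => v2 t * t) b := by
    rw [hAV, mul_assoc]
    have hABb : A * B = b := rfl
    rw [hABb]
    have hm := cfc_mul v2 (fun t : ℝ => t) b hv2.continuousOn continuous_id.continuousOn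
    rw [cfc_id' ℝ b] at hm
    rw [← hm]
  have hVBy : ‖V (B y)‖ ^ 2 = re ⟪cfc (fun t => v2 t * t) b y, y⟫_ℂ := by
    rw [← inner_self_eq_norm_sq (𝕜 := ℂ) (V (B y))]
    have h1 : ⟪V (B y), V (B y)⟫_ℂ = ⟪B y, (V * V) (B y)⟫_ℂ := by
      rw [ContinuousLinearMap.mul_apply]
      exact sa_inner_left_right hVsa (B y) (V (B y))
    have h2 : ⟪B y, (V * V) (B y)⟫_ℂ = ⟪y, (A * (V * V) * B) y⟫_ℂ := by
      rw [hB_def]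
      rw [adjoint_inner_left A ((V * V) ((adjoint A) y)) y]
      rfl
    rw [h1, h2, hW, inner_re_symm]
  -- W ≤ Q
  have hQW : re ⟪cfc (fun t => v2 t * t) b y, y⟫_ℂ ≤ re ⟪cfc Real.sqrt b y, y⟫_ℂ := by
    have hfun : ∀ t : ℝ, 0 ≤ Real.sqrt t - v2 t * t := by
      intro t
      simp only [hv2_def]
      rcases le_or_gt 0 t with h | h
      · rw [sub_nonneg, inv_mul_le_iff₀ (hbase t)]
        nlinarith [Real.sqrt_nonneg t, Real.mul_self_sqrt h]
      · have hst : Real.sqrt t = 0 := Real.sqrt_eq_zero'.mpr h.le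
        rw [hst]
        rw [zero_add, sub_nonneg]
        have : ε⁻¹ * t ≤ 0 := mul_nonpos_of_nonneg_of_nonpos (by positivity) h.le
        linarith
    have hcont : Continuous fun t : ℝ => v2 t * t := hv2.mul continuous_id
    have hpos : (0:H →L[ℂ] H) ≤ cfc (fun t => Real.sqrt t - v2 t * t) b :=
      cfc_nonneg (fun t _ => hfun t)
    rw [cfc_sub Real.sqrt (fun t => v2 t * t) b Real.continuous_sqrt.continuousOn
      hcont.continuousOn] at hpos
    have h3 := inner_nonneg_of_nonneg hpos y
    rw [ContinuousLinearMap.sub_apply, inner_sub_left, map_sub] at h3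
    linarith
  -- assembly
  have hins : ‖⟪A x, y⟫_ℂ‖ = ‖⟪V (B y), U x⟫_ℂ‖ := by
    have h1 : ⟪B y, x⟫_ℂ = ⟪V (B y), U x⟫_ℂ := by
      conv_lhs => rw [← hxVU]
      exact (sa_inner_left_right hVsa (B y) (U x)).symm
    rw [norm_inner_symm (𝕜 := ℂ)]
    rw [hB_def] at h1
    rw [← adjoint_inner_left A x y, h1]
  calc ‖⟪A x, y⟫_ℂ‖ ^ 2 = ‖⟪V (B y), U x⟫_ℂ‖ ^ 2 := by rw [hins]
    _ ≤ (‖V (B y)‖ * ‖U x‖) ^ 2 :=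
        pow_le_pow_left₀ (norm_nonneg _) (norm_inner_le_norm (𝕜 := ℂ) _ _) 2
    _ = ‖V (B y)‖ ^ 2 * ‖U x‖ ^ 2 := by ring
    _ ≤ re ⟪cfc Real.sqrt b y, y⟫_ℂ * ‖U x‖ ^ 2 := by
        rw [hVBy]
        exact mul_le_mul_of_nonneg_right hQW (sq_nonneg _)
    _ = (re ⟪cfc Real.sqrt a x, x⟫_ℂ + ε * ‖x‖ ^ 2) * re ⟪cfc Real.sqrt b y, y⟫_ℂ := by
        rw [hUx]; ring

lemma kato (A : H →L[ℂ] H) (x y : H) :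
    ‖⟪A x, y⟫_ℂ‖ ^ 2 ≤
      re ⟪cfc Real.sqrt (adjoint A * A) x, x⟫_ℂ * re ⟪cfc Real.sqrt (A * adjoint A) y, y⟫_ℂ := by
  have hq0 : 0 ≤ re ⟪cfc Real.sqrt (A * adjoint A) y, y⟫_ℂ :=
    inner_nonneg_of_nonneg (cfc_nonneg fun t _ => Real.sqrt_nonneg t) y
  set Q := re ⟪cfc Real.sqrt (A * adjoint A) y, y⟫_ℂ with hQ
  set P := re ⟪cfc Real.sqrt (adjoint A * A) x, x⟫_ℂ with hP
  refine le_of_forall_pos_le_add fun δ hδ => ?_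
  set ε : ℝ := δ / (‖x‖ ^ 2 * Q + 1) with hε_def
  have hd : (0:ℝ) < ‖x‖ ^ 2 * Q + 1 := by positivity
  have hε : 0 < ε := by positivity
  calc ‖⟪A x, y⟫_ℂ‖ ^ 2 ≤ (P + ε * ‖x‖ ^ 2) * Q := kato_eps A x y hε
    _ = P * Q + ε * (‖x‖ ^ 2 * Q) := by ring
    _ ≤ P * Q + δ := by
        have h1 : ε * (‖x‖ ^ 2 * Q) ≤ ε * (‖x‖ ^ 2 * Q + 1) := by
          apply mul_le_mul_of_nonneg_left (by linarith) hε.le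
        have h2 : ε * (‖x‖ ^ 2 * Q + 1) = δ := by
          rw [hε_def, div_mul_cancel₀]
          exact ne_of_gt hd
        linarith

lemma buzano {e : H} (he : ‖e‖ = 1) (u v : H) :
    ‖⟪u, e⟫_ℂ * ⟪e, v⟫_ℂ‖ ≤ (‖u‖ * ‖v‖ + ‖⟪u, v⟫_ℂ‖) / 2 := by
  set c : ℂ := (2 : ℂ) * ⟪e, v⟫_ℂ with hc
  set w : H := c • e - v with hw_def
  have hnc : ‖c‖ = 2 * ‖⟪e, v⟫_ℂ‖ := by
    rw [hc, norm_mul]; norm_num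
  have hre : re ⟪c • e, v⟫_ℂ = 2 * ‖⟪e, v⟫_ℂ‖ ^ 2 := by
    rw [inner_smul_left, hc]
    have h2 : (starRingEnd ℂ) (2 * ⟪e, v⟫_ℂ) = 2 * (starRingEnd ℂ) ⟪e, v⟫_ℂ := by
      rw [map_mul, Complex.conj_ofNat]
    rw [h2, mul_assoc, RCLike.conj_mul]
    rw [← RCLike.ofReal_pow, mul_comm, RCLike.re_ofReal_mul]
    simp [mul_comm]
  have hwsq : ‖w‖ ^ 2 = ‖v‖ ^ 2 := by
    rw [hw_def, norm_sub_sq (𝕜 := ℂ), norm_smul, hnc, hre, he]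
    ring
  have hw : ‖w‖ = ‖v‖ := by
    nlinarith [norm_nonneg w, norm_nonneg v, hwsq]
  have hiw : ⟪u, w⟫_ℂ = c * ⟪u, e⟫_ℂ - ⟪u, v⟫_ℂ := by
    rw [hw_def, inner_sub_right, inner_smul_right]
  have key : ‖c * ⟪u, e⟫_ℂ‖ ≤ ‖u‖ * ‖v‖ + ‖⟪u, v⟫_ℂ‖ := by
    calc ‖c * ⟪u, e⟫_ℂ‖ = ‖⟪u, w⟫_ℂ + ⟪u, v⟫_ℂ‖ := by rw [hiw]; ring_nf
      _ ≤ ‖⟪u, w⟫_ℂ‖ + ‖⟪u, v⟫_ℂ‖ := norm_add_le _ _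
      _ ≤ ‖u‖ * ‖w‖ + ‖⟪u, v⟫_ℂ‖ := by
          gcongr; exact norm_inner_le_norm _ _
      _ = ‖u‖ * ‖v‖ + ‖⟪u, v⟫_ℂ‖ := by rw [hw]
  have hlhs : ‖c * ⟪u, e⟫_ℂ‖ = 2 * ‖⟪u, e⟫_ℂ * ⟪e, v⟫_ℂ‖ := by
    rw [norm_mul, hnc, norm_mul]; ring
  rw [hlhs] at key
  linarith

end Helpers

set_option maxHeartbeats 2000000 in
theorem stmt15 {H : Type*} [NormedAddCommGroup H] [InnerProductSpace ℂ H] [CompleteSpace H]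
    {Ω : Type*} [Nonempty Ω] (k : Ω → H) (hk : ∀ l, ‖k l‖ = 1)
    (A : H →L[ℂ] H) :
    berNum k A ^ 2 ≤
      (1 / 12) * berNorm k ((absOp A) ^ 2 + (absOp (adjoint A)) ^ 2) +
      (1 / 6) * berNum k (absOp (adjoint A) * absOp A) +
      (1 / 3) * berNum k A * berNorm k (absOp A + absOp (adjoint A)) := by
  set P := absOp A with hP_def
  set Q := absOp (adjoint A) with hQ_def
  have hQeq : Q = cfc Real.sqrt (A * adjoint A) := by
    rw [hQ_def]; unfold absOp; rw [adjoint_adjoint]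
  have hPsa : IsSelfAdjoint P := cfc_predicate _ _
  have hQsa : IsSelfAdjoint Q := by rw [hQeq]; exact cfc_predicate _ _
  have hPpos : (0 : H →L[ℂ] H) ≤ P := cfc_nonneg fun t _ => Real.sqrt_nonneg t
  have hQpos : (0 : H →L[ℂ] H) ≤ Q := by
    rw [hQeq]; exact cfc_nonneg fun t _ => Real.sqrt_nonneg t
  have hbdd1 : ∀ T : H →L[ℂ] H, BddAbove (Set.range fun l : Ω => ‖⟪T (k l), k l⟫_ℂ‖) := by
    intro T
    refine ⟨‖T‖, ?_⟩
    rintro _ ⟨l, rfl⟩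
    calc ‖⟪T (k l), k l⟫_ℂ‖ ≤ ‖T (k l)‖ * ‖k l‖ := norm_inner_le_norm _ _
      _ ≤ ‖T‖ * ‖k l‖ * ‖k l‖ := by gcongr; exact T.le_opNorm _
      _ = ‖T‖ := by rw [hk l]; ring
  have hbdd2 : ∀ T : H →L[ℂ] H,
      BddAbove (Set.range fun pr : Ω × Ω => ‖⟪T (k pr.1), k pr.2⟫_ℂ‖) := by
    intro T
    refine ⟨‖T‖, ?_⟩
    rintro _ ⟨pr, rfl⟩
    calc ‖⟪T (k pr.1), k pr.2⟫_ℂ‖ ≤ ‖T (k pr.1)‖ * ‖k pr.2‖ := norm_inner_le_norm _ _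
      _ ≤ ‖T‖ * ‖k pr.1‖ * ‖k pr.2‖ := by gcongr; exact T.le_opNorm _
      _ = ‖T‖ := by rw [hk pr.1, hk pr.2]; ring
  set N1 := berNorm k (P ^ 2 + Q ^ 2) with hN1_def
  set N2 := berNum k (Q * P) with hN2_def
  set N3 := berNorm k (P + Q) with hN3_def
  set Bn := berNum k A with hBn_def
  have hN1 : 0 ≤ N1 := Real.iSup_nonneg fun p => norm_nonneg _
  have hN2 : 0 ≤ N2 := Real.iSup_nonneg fun p => norm_nonneg _
  have hN3 : 0 ≤ N3 := Real.iSup_nonneg fun p => norm_nonneg _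
  have hBn : 0 ≤ Bn := Real.iSup_nonneg fun p => norm_nonneg _
  set K : ℝ := (1 / 12) * N1 + (1 / 6) * N2 + (1 / 3) * Bn * N3 with hK_def
  have hK : 0 ≤ K := by
    have h1 := mul_nonneg (mul_nonneg (by norm_num : (0:ℝ) ≤ 1/3) hBn) hN3
    have h2 := mul_nonneg (by norm_num : (0:ℝ) ≤ 1/12) hN1
    have h3 := mul_nonneg (by norm_num : (0:ℝ) ≤ 1/6) hN2
    rw [hK_def]
    linarith
  have key : ∀ l : Ω, ‖⟪A (k l), k l⟫_ℂ‖ ^ 2 ≤ K := by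
    intro l
    set e := k l with he_def
    have he : ‖e‖ = 1 := hk l
    set c := ‖⟪A e, e⟫_ℂ‖ with hc_def
    have hc0 : 0 ≤ c := norm_nonneg _
    set p := re ⟪P e, e⟫_ℂ with hp_def
    set q := re ⟪Q e, e⟫_ℂ with hq_def
    have hp0 : 0 ≤ p := inner_nonneg_of_nonneg hPpos e
    have hq0 : 0 ≤ q := inner_nonneg_of_nonneg hQpos e
    have h1 : c ^ 2 ≤ p * q := by
      rw [hc_def, hp_def, hq_def, hQeq, hP_def]
      exact kato A e e
    have hPe2 : ‖P e‖ ^ 2 = re ⟪(P ^ 2) e, e⟫_ℂ := by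
      rw [← inner_self_eq_norm_sq (𝕜 := ℂ)]
      rw [show (P ^ 2) e = P (P e) by rw [sq]; rfl]
      rw [sa_inner_left_right hPsa (P e) e]
    have hQe2 : ‖Q e‖ ^ 2 = re ⟪(Q ^ 2) e, e⟫_ℂ := by
      rw [← inner_self_eq_norm_sq (𝕜 := ℂ)]
      rw [show (Q ^ 2) e = Q (Q e) by rw [sq]; rfl]
      rw [sa_inner_left_right hQsa (Q e) e]
    have hcross : ⟪P e, Q e⟫_ℂ = ⟪(Q * P) e, e⟫_ℂ := by
      rw [show (Q * P) e = Q (P e) from rfl, sa_inner_left_right hQsa (P e) e]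
    have hsum : ‖P e‖ ^ 2 + ‖Q e‖ ^ 2 = re ⟪(P ^ 2 + Q ^ 2) e, e⟫_ℂ := by
      rw [ContinuousLinearMap.add_apply, inner_add_left, map_add, hPe2, hQe2]
    have h2 : p * q ≤ re ⟪(P ^ 2 + Q ^ 2) e, e⟫_ℂ / 4 + ‖⟪(Q * P) e, e⟫_ℂ‖ / 2 := by
      have hbz := buzano he (P e) (Q e)
      have hpq : p * q ≤ ‖⟪P e, e⟫_ℂ * ⟪e, Q e⟫_ℂ‖ := by
        rw [norm_mul]
        have hple : p ≤ ‖⟪P e, e⟫_ℂ‖ := re_le_norm _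
        have hqle : q ≤ ‖⟪e, Q e⟫_ℂ‖ := by
          rw [hq_def, inner_re_symm]
          exact re_le_norm _
        exact mul_le_mul hple hqle hq0 (norm_nonneg _)
      have hprod : ‖P e‖ * ‖Q e‖ ≤ re ⟪(P ^ 2 + Q ^ 2) e, e⟫_ℂ / 2 := by
        nlinarith [sq_nonneg (‖P e‖ - ‖Q e‖)]
      rw [hcross] at hbz
      linarith
    have hXle : re ⟪(P ^ 2 + Q ^ 2) e, e⟫_ℂ ≤ N1 := by
      refine le_trans (re_le_norm _) ?_
      exact le_ciSup (hbdd2 (P ^ 2 + Q ^ 2)) (l, l)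
    have hYle : ‖⟪(Q * P) e, e⟫_ℂ‖ ≤ N2 := le_ciSup (hbdd1 (Q * P)) l
    have h3 : c ≤ (p + q) / 2 := by
      have hs1 : c ≤ Real.sqrt (p * q) := Real.le_sqrt_of_sq_le h1
      have hs2 : Real.sqrt (p * q) ≤ Real.sqrt (((p + q) / 2) ^ 2) := by
        apply Real.sqrt_le_sqrt
        nlinarith [sq_nonneg (p - q)]
      rw [Real.sqrt_sq (by linarith)] at hs2
      linarith
    have hcBn : c ≤ Bn := le_ciSup (hbdd1 A) l
    have hm2 : (p + q) / 2 ≤ N3 / 2 := by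
      have hpq3 : p + q = re ⟪(P + Q) e, e⟫_ℂ := by
        rw [ContinuousLinearMap.add_apply, inner_add_left, map_add]
      have : re ⟪(P + Q) e, e⟫_ℂ ≤ N3 := by
        refine le_trans (re_le_norm _) ?_
        exact le_ciSup (hbdd2 (P + Q)) (l, l)
      linarith
    have hcm : c * ((p + q) / 2) ≤ Bn * (N3 / 2) :=
      mul_le_mul hcBn hm2 (by linarith) hBn
    have hcc : c * c ≤ c * ((p + q) / 2) := mul_le_mul_of_nonneg_left h3 hc0
    have hsq : c ^ 2 = c * c := sq c
    rw [hK_def]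
    linarith [h1, h2, hXle, hYle, hcc, hcm]
  -- conclude
  have hBnle : Bn ≤ Real.sqrt K := by
    refine Real.iSup_le (fun l => ?_) (Real.sqrt_nonneg K)
    exact Real.le_sqrt_of_sq_le (key l)
  calc Bn ^ 2 ≤ Real.sqrt K ^ 2 := by
        exact pow_le_pow_left₀ hBn hBnle 2
    _ = K := Real.sq_sqrt hK
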